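/- arXiv:1307.7932 — 4 statements merged into one kernel-verified Lean document; each statement's English description precedes it below -/
import Mathlib

section
/- Let X₁, X₂, … be a sequence of real-valued random variables. Assume that there are constants A > 0, a > 0, b ≥ 0 and γ ∈ (0,2) such that for all integers m ≥ 0, n ≥ 1 and all real t ≥ 0, P{|S(m+1, m+n)| > t} ≤ A·exp{ −a t² / (n + b t^γ) }. Then for every 0 < c < a there exists a constant C > 0 (depending only on A, a, b and γ) such that for all n ≥ 1, m ≥ 0 and t ≥ 0, P{M(m+1, m+n) > t} ≤ C·exp{ −c t² / (n + b t^γ) }. -/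
/-!
Write `E(n, t) = t² / (n + b t^γ)`. The proof is by strong induction on `n`. If `n = h + k` with
`k ≈ θ²n/2`, then `M(m+1, m+n) > t` forces `M(m+1, m+h) > t`, `|S(m+1, m+h)| > (1-θ)t` or
`M(m+h+1, m+n) > θt`. When `b t^γ ≤ θ²n/4`, the exponents of these three bounds beat `c E(n, t)`
by a fixed fraction of `E(n, t)`, so once `E(n, t)` is large each term is at most a third of
`C exp(-c E(n, t))`; for `E(n, t)` bounded the claim is trivial. In the remaining regimes (`n`
small, or `b t^γ > θ²n/4`) the union bound costs a factor `n`, which `exp(-(a - c) E(n, t))`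
absorbs because `t^γ exp(-α t^(2-γ))` is bounded for `γ < 2`.
-/

open MeasureTheory Real

namespace MaximalBernstein

noncomputable def bernsteinExponent (b γ x t : ℝ) : ℝ := t ^ 2 / (x + b * t ^ γ)

theorem neg_mul_bernsteinExponent (a b γ x t : ℝ) :
    -(a * bernsteinExponent b γ x t) = -(a * t ^ 2) / (x + b * t ^ γ) := by
  rw [bernsteinExponent, neg_div, mul_div_assoc]

section Exponent

variable {b γ x t : ℝ}

theorem bernsteinExponent_nonneg (hb : 0 ≤ b) (hx : 0 ≤ x) (ht : 0 ≤ t) :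
    0 ≤ bernsteinExponent b γ x t := by
  have := rpow_nonneg ht γ
  unfold bernsteinExponent
  positivity

theorem bernsteinExponent_le_of_le {y : ℝ} (hb : 0 ≤ b) (ht : 0 ≤ t) (hx : 0 < x)
    (hxy : x ≤ y) : bernsteinExponent b γ y t ≤ bernsteinExponent b γ x t := by
  have := mul_nonneg hb (rpow_nonneg ht γ)
  exact div_le_div_of_nonneg_left (sq_nonneg t) (by positivity) (by linarith)

theorem mul_bernsteinExponent_le {r s y : ℝ} (hb : 0 ≤ b) (hγ : 0 ≤ γ) (ht : 0 ≤ t)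
    (hs0 : 0 ≤ s) (hs1 : s ≤ 1) (hx : 0 < x) (hy : 0 < y)
    (h : r * (x + b * t ^ γ) ≤ s ^ 2 * (y + b * t ^ γ)) :
    r * bernsteinExponent b γ y t ≤ bernsteinExponent b γ x (s * t) := by
  have htγ := rpow_nonneg ht γ
  have hst : (s * t) ^ γ ≤ t ^ γ :=
    rpow_le_rpow (by positivity) (mul_le_of_le_one_left ht hs1) hγ
  unfold bernsteinExponent
  calc r * (t ^ 2 / (y + b * t ^ γ)) ≤ (s * t) ^ 2 / (x + b * t ^ γ) := by
        rw [← mul_div_assoc, div_le_div_iff₀ (by positivity) (by positivity)]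
        nlinarith [sq_nonneg t]
    _ ≤ (s * t) ^ 2 / (x + b * (s * t) ^ γ) := by
        have := rpow_nonneg (mul_nonneg hs0 ht) γ
        gcongr

theorem rpow_mul_exp_neg_le {p α y : ℝ} (hp : 0 < p) (hα : 0 < α) (hy : 0 ≤ y) :
    y ^ p * exp (-(α * y)) ≤ (p / α) ^ p := by
  have key : (α / p * y) ^ p ≤ exp (α * y) := by
    calc (α / p * y) ^ p ≤ exp (α / p * y) ^ p := by
          gcongr
          linarith [add_one_le_exp (α / p * y)]
      _ = exp (α * y) := by
          rw [← exp_mul]; congr 1; field_simp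
  rw [mul_rpow (by positivity) hy, div_rpow hα.le hp.le] at key
  rw [exp_neg, ← div_eq_mul_inv, div_le_iff₀ (exp_pos _), div_rpow hp.le hα.le]
  rw [div_mul_eq_mul_div, div_le_iff₀ (by positivity)] at key
  rw [div_mul_eq_mul_div, le_div_iff₀ (by positivity)]
  linarith

theorem mul_rpow_two_sub_le_bernsteinExponent {δ : ℝ} (hb : 0 < b) (hδ : 0 < δ) (hx : 0 ≤ x)
    (ht : 0 < t) (h : δ * x ≤ b * t ^ γ) :
    δ / ((1 + δ) * b) * t ^ (2 - γ) ≤ bernsteinExponent b γ x t := by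
  have htγ := rpow_pos_of_pos ht γ
  rw [bernsteinExponent, rpow_sub ht, rpow_two, div_mul_div_comm,
    div_le_div_iff₀ (by positivity) (by positivity)]
  have hxle : δ * (x + b * t ^ γ) ≤ (1 + δ) * b * t ^ γ := by linarith
  nlinarith [mul_le_mul_of_nonneg_left hxle (sq_nonneg t)]

theorem exists_mul_exp_neg_bernsteinExponent_le {α δ : ℝ} (hα : 0 < α) (hδ : 0 < δ) (hb : 0 ≤ b)
    (hγ0 : 0 < γ) (hγ2 : γ < 2) :
    ∃ B, ∀ x t : ℝ, 0 < x → 0 ≤ t → δ * x < max 1 (b * t ^ γ) →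
      x * exp (-(α * bernsteinExponent b γ x t)) ≤ B := by
  set p := γ / (2 - γ)
  set β := α * (δ / ((1 + δ) * b))
  have hp : 0 < p := div_pos hγ0 (by linarith)
  refine ⟨1 / δ + b / δ * (p / β) ^ p, fun x t hx ht hxt => ?_⟩
  have hexp : exp (-(α * bernsteinExponent b γ x t)) ≤ 1 := by
    have : 0 ≤ bernsteinExponent b γ x t := bernsteinExponent_nonneg hb hx.le ht
    rw [exp_le_one_iff]
    nlinarith
  rcases lt_max_iff.mp hxt with hx1 | hxb
  · have : 0 ≤ b / δ * (p / β) ^ p := by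
      have : 0 ≤ β := by positivity
      positivity
    calc x * exp (-(α * bernsteinExponent b γ x t)) ≤ x := mul_le_of_le_one_right hx.le hexp
      _ ≤ 1 / δ := by rw [le_div_iff₀ hδ]; linarith
      _ ≤ _ := by linarith
  have hb' : 0 < b := lt_of_le_of_ne hb (by rintro rfl; nlinarith)
  have ht' : 0 < t := lt_of_le_of_ne ht (by rintro rfl; rw [zero_rpow hγ0.ne'] at hxb; nlinarith)
  have htγ : t ^ γ = (t ^ (2 - γ)) ^ p := by
    rw [← rpow_mul ht, mul_div_cancel₀ _ (by linarith)]
  have hβ : 0 < β := by positivity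
  have hexp' : exp (-(α * bernsteinExponent b γ x t)) ≤ exp (-(β * t ^ (2 - γ))) := by
    have := mul_rpow_two_sub_le_bernsteinExponent hb' hδ hx.le ht' hxb.le
    rw [exp_le_exp, neg_le_neg_iff, mul_assoc]
    gcongr
  calc x * exp (-(α * bernsteinExponent b γ x t))
      ≤ b * t ^ γ / δ * exp (-(β * t ^ (2 - γ))) := by
        gcongr
        rw [le_div_iff₀ hδ]; linarith
    _ = b / δ * ((t ^ (2 - γ)) ^ p * exp (-(β * t ^ (2 - γ)))) := by rw [htγ]; ring
    _ ≤ b / δ * (p / β) ^ p := by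
        gcongr
        exact rpow_mul_exp_neg_le hp hβ (rpow_nonneg ht _)
    _ ≤ 1 / δ + b / δ * (p / β) ^ p := le_add_of_nonneg_left (by positivity)

theorem exp_neg_le_exp_neg_div_three {u v : ℝ} (h : u + log 3 ≤ v) :
    exp (-v) ≤ exp (-u) / 3 := by
  calc exp (-v) ≤ exp (-u + -log 3) := by gcongr; linarith
    _ = exp (-u) / 3 := by rw [exp_add, exp_neg (log 3), exp_log (by norm_num), div_eq_mul_inv]

theorem add_exp_neg_bernsteinExponent_le {a c A C θ h k : ℝ} (hb : 0 ≤ b) (hγ : 0 ≤ γ)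
    (ht : 0 ≤ t) (ha : 0 ≤ a) (hc : 0 ≤ c) (hθ0 : 0 < θ) (hθ1 : θ < 1)
    (hcθ : c ≤ a * (1 - θ) ^ 2) (hA : 0 ≤ A) (hAC : 3 * A ≤ C) (hh : 0 < h)
    (hk1 : θ ^ 2 / 4 * (h + k) ≤ k) (hk2 : k ≤ θ ^ 2 / 2 * (h + k))
    (hbt : b * t ^ γ ≤ θ ^ 2 / 4 * (h + k))
    (hlog : log 3 ≤ c * (θ ^ 2 / 4) * bernsteinExponent b γ (h + k) t) :
    C * exp (-(c * bernsteinExponent b γ h t)) +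
        A * exp (-(a * bernsteinExponent b γ h ((1 - θ) * t))) +
        C * exp (-(c * bernsteinExponent b γ k (θ * t))) ≤
      C * exp (-(c * bernsteinExponent b γ (h + k) t)) := by
  set E := bernsteinExponent b γ (h + k) t
  have hk : 0 < k := by nlinarith [mul_pos (pow_pos hθ0 2) hh]
  have hE : 0 ≤ E := bernsteinExponent_nonneg hb (by linarith) ht
  have hB := mul_nonneg hb (rpow_nonneg ht γ)
  have hθ2 : θ ^ 2 < 1 := by nlinarith
  have hleft : (1 + θ ^ 2 / 4) * E ≤ bernsteinExponent b γ h (1 * t) :=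
    mul_bernsteinExponent_le hb hγ ht zero_le_one le_rfl hh (by linarith) (by nlinarith)
  have hmid : (1 - θ) ^ 2 * E ≤ bernsteinExponent b γ h ((1 - θ) * t) :=
    mul_bernsteinExponent_le hb hγ ht (by linarith) (by linarith) hh (by linarith)
      (by nlinarith)
  have hright : 4 / 3 * E ≤ bernsteinExponent b γ k (θ * t) :=
    mul_bernsteinExponent_le hb hγ ht hθ0.le hθ1.le hk (by linarith) (by nlinarith)
  rw [one_mul] at hleft
  have h1 : exp (-(c * bernsteinExponent b γ h t)) ≤ exp (-(c * E)) / 3 :=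
    exp_neg_le_exp_neg_div_three (by nlinarith)
  have h2 : exp (-(a * bernsteinExponent b γ h ((1 - θ) * t))) ≤ exp (-(c * E)) := by
    rw [exp_le_exp, neg_le_neg_iff]
    nlinarith [mul_le_mul_of_nonneg_left hmid ha, mul_le_mul_of_nonneg_right hcθ hE]
  have h3 : exp (-(c * bernsteinExponent b γ k (θ * t))) ≤ exp (-(c * E)) / 3 :=
    exp_neg_le_exp_neg_div_three
      (by nlinarith [mul_le_mul_of_nonneg_left hright hc,
        mul_le_mul_of_nonneg_left hθ2.le (mul_nonneg hc hE)])
  have hC : 0 ≤ C := by linarith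
  calc _ ≤ C * (exp (-(c * E)) / 3) + C / 3 * exp (-(c * E)) + C * (exp (-(c * E)) / 3) := by
        refine add_le_add (add_le_add (by gcongr) ?_) (by gcongr)
        calc A * exp (-(a * bernsteinExponent b γ h ((1 - θ) * t))) ≤ A * exp (-(c * E)) := by
              gcongr
          _ ≤ C / 3 * exp (-(c * E)) := by gcongr; linarith
    _ = C * exp (-(c * E)) := by ring

end Exponent

theorem exists_eq_add_of_one_le_mul {δ : ℝ} (hδ : 2 * δ < 1) {n : ℕ} (hn : 1 ≤ δ * n) :
    ∃ h k : ℕ, n = h + k ∧ 1 ≤ h ∧ δ * n ≤ k ∧ (k : ℝ) ≤ 2 * δ * n := by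
  have hn0 : (0 : ℝ) < n := by nlinarith
  have hk : (⌊2 * δ * n⌋₊ : ℝ) ≤ 2 * δ * n := Nat.floor_le (by nlinarith)
  have hkn : ⌊2 * δ * n⌋₊ < n := by
    have : 2 * δ * n < n := by nlinarith
    exact_mod_cast hk.trans_lt this
  refine ⟨n - ⌊2 * δ * n⌋₊, ⌊2 * δ * n⌋₊, by omega, by omega, ?_, hk⟩
  linarith [Nat.lt_floor_add_one (2 * δ * n)]

theorem exists_pos_lt_one_le_mul_one_sub_sq {a c : ℝ} (hc : 0 < c) (hca : c < a) :
    ∃ θ : ℝ, 0 < θ ∧ θ < 1 ∧ c ≤ a * (1 - θ) ^ 2 := by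
  have ha : 0 < a := hc.trans hca
  refine ⟨(a - c) / (2 * a), div_pos (by linarith) (by linarith),
    (div_lt_one (by linarith)).2 (by linarith), ?_⟩
  rw [show a * (1 - (a - c) / (2 * a)) ^ 2 = (a + c) ^ 2 / (4 * a) by field_simp; ring,
    le_div_iff₀ (by linarith)]
  nlinarith [sq_nonneg (a - c)]

section PartialSums

variable {Ω : Type*}

def partialSum (X : ℕ → Ω → ℝ) (m j : ℕ) (ω : Ω) : ℝ :=
  ∑ i ∈ Finset.Icc (m + 1) (m + j), X i ω

theorem partialSum_add (X : ℕ → Ω → ℝ) (m h j : ℕ) (ω : Ω) :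
    partialSum X m (h + j) ω = partialSum X m h ω + partialSum X (m + h) j ω := by
  simp only [partialSum, Finset.Icc_add_one_left_eq_Ioc, ← add_assoc]
  exact (Finset.sum_Ioc_consecutive _ (by omega) (by omega)).symm

def maxPartialSumExceeds (X : ℕ → Ω → ℝ) (m n : ℕ) (t : ℝ) : Set Ω :=
  ⋃ j ∈ Finset.Icc 1 n, {ω | t < |partialSum X m j ω|}

theorem setOf_lt_sup'_eq_maxPartialSumExceeds (X : ℕ → Ω → ℝ) (m n : ℕ) (hn : 1 ≤ n) (t : ℝ) :
    {ω | t < (Finset.Icc 1 n).sup' (Finset.nonempty_Icc.mpr hn) (fun j => |partialSum X m j ω|)} =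
      maxPartialSumExceeds X m n t := by
  ext ω
  simp [maxPartialSumExceeds, Finset.lt_sup'_iff]

theorem maxPartialSumExceeds_add_subset (X : ℕ → Ω → ℝ) (m h k : ℕ) (θ t : ℝ) :
    maxPartialSumExceeds X m (h + k) t ⊆
      maxPartialSumExceeds X m h t ∪ {ω | (1 - θ) * t < |partialSum X m h ω|} ∪
        maxPartialSumExceeds X (m + h) k (θ * t) := by
  intro ω hω
  simp only [maxPartialSumExceeds, Set.mem_iUnion₂, Set.mem_ofPred_eq, Finset.mem_Icc,
    Set.mem_union] at hω ⊢
  obtain ⟨j, ⟨hj1, hjn⟩, hjt⟩ := hω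
  by_cases hjh : j ≤ h
  · exact Or.inl (Or.inl ⟨j, ⟨hj1, hjh⟩, hjt⟩)
  by_cases hSh : (1 - θ) * t < |partialSum X m h ω|
  · exact Or.inl (Or.inr hSh)
  obtain ⟨i, rfl⟩ := Nat.exists_eq_add_of_lt (not_le.1 hjh)
  refine Or.inr ⟨i + 1, ⟨by omega, by omega⟩, ?_⟩
  rw [add_assoc, partialSum_add] at hjt
  linarith [abs_add_le (partialSum X m h ω) (partialSum X (m + h) (i + 1) ω)]

variable [MeasurableSpace Ω] (P : Measure Ω) (X : ℕ → Ω → ℝ)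

theorem measureReal_maxPartialSumExceeds_add_le [IsFiniteMeasure P] (m h k : ℕ) (θ t : ℝ) :
    P.real (maxPartialSumExceeds X m (h + k) t) ≤
      P.real (maxPartialSumExceeds X m h t) + P.real {ω | (1 - θ) * t < |partialSum X m h ω|} +
        P.real (maxPartialSumExceeds X (m + h) k (θ * t)) :=
  (measureReal_mono (maxPartialSumExceeds_add_subset X m h k θ t)).trans
    ((measureReal_union_le _ _).trans (by gcongr; exact measureReal_union_le _ _))

theorem measureReal_maxPartialSumExceeds_le_mul {A a b γ : ℝ} (hA : 0 ≤ A) (ha : 0 ≤ a)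
    (hb : 0 ≤ b) (hS : ∀ m n : ℕ, 1 ≤ n → ∀ t : ℝ, 0 ≤ t →
      P.real {ω | t < |partialSum X m n ω|} ≤ A * exp (-(a * bernsteinExponent b γ n t)))
    (m n : ℕ) {t : ℝ} (ht : 0 ≤ t) :
    P.real (maxPartialSumExceeds X m n t) ≤ n * (A * exp (-(a * bernsteinExponent b γ n t))) := by
  calc P.real (maxPartialSumExceeds X m n t)
      ≤ ∑ j ∈ Finset.Icc 1 n, P.real {ω | t < |partialSum X m j ω|} :=
        measureReal_biUnion_finset_le _ _
    _ ≤ ∑ _j ∈ Finset.Icc 1 n, A * exp (-(a * bernsteinExponent b γ n t)) := by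
        refine Finset.sum_le_sum fun j hj => (hS m j (Finset.mem_Icc.1 hj).1 t ht).trans ?_
        have hj1 : (1 : ℝ) ≤ j := by exact_mod_cast (Finset.mem_Icc.1 hj).1
        have hjn : (j : ℝ) ≤ n := by exact_mod_cast (Finset.mem_Icc.1 hj).2
        gcongr
        exact bernsteinExponent_le_of_le hb ht (by linarith) hjn
    _ = n * (A * exp (-(a * bernsteinExponent b γ n t))) := by simp

theorem measureReal_maxPartialSumExceeds_le_of_mul_exp_le {A a b γ c B : ℝ} (hA : 0 ≤ A)
    (ha : 0 ≤ a) (hb : 0 ≤ b) (hS : ∀ m n : ℕ, 1 ≤ n → ∀ t : ℝ, 0 ≤ t →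
      P.real {ω | t < |partialSum X m n ω|} ≤ A * exp (-(a * bernsteinExponent b γ n t)))
    (m n : ℕ) {t : ℝ} (ht : 0 ≤ t)
    (hB : n * exp (-((a - c) * bernsteinExponent b γ n t)) ≤ B) :
    P.real (maxPartialSumExceeds X m n t) ≤ A * B * exp (-(c * bernsteinExponent b γ n t)) := by
  calc P.real (maxPartialSumExceeds X m n t)
      ≤ n * (A * exp (-(a * bernsteinExponent b γ n t))) :=
        measureReal_maxPartialSumExceeds_le_mul P X hA ha hb hS m n ht
    _ = A * (n * exp (-((a - c) * bernsteinExponent b γ n t))) *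
          exp (-(c * bernsteinExponent b γ n t)) := by
        rw [mul_assoc A, mul_assoc _ (exp _), ← exp_add]; ring_nf
    _ ≤ A * B * exp (-(c * bernsteinExponent b γ n t)) := by gcongr

theorem exists_measureReal_maxPartialSumExceeds_le [IsProbabilityMeasure P] {A a b γ c : ℝ}
    (hA : 0 ≤ A) (hb : 0 ≤ b) (hγ0 : 0 < γ) (hγ2 : γ < 2) (hc : 0 < c) (hca : c < a)
    (hS : ∀ m n : ℕ, 1 ≤ n → ∀ t : ℝ, 0 ≤ t →
      P.real {ω | t < |partialSum X m n ω|} ≤ A * exp (-(a * bernsteinExponent b γ n t))) :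
    ∃ C, 0 < C ∧ ∀ m n : ℕ, 1 ≤ n → ∀ t : ℝ, 0 ≤ t →
      P.real (maxPartialSumExceeds X m n t) ≤ C * exp (-(c * bernsteinExponent b γ n t)) := by
  obtain ⟨θ, hθ0, hθ1, hcθ⟩ := exists_pos_lt_one_le_mul_one_sub_sq hc hca
  have hδ : 2 * (θ ^ 2 / 4) < 1 := by nlinarith
  obtain ⟨B, hB⟩ := exists_mul_exp_neg_bernsteinExponent_le (sub_pos.2 hca)
    (div_pos (pow_pos hθ0 2) four_pos) hb hγ0 hγ2
  -- above `u`, the gain `c θ²/4 · E` in the exponents of the split is at least `log 3`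
  set u := log 3 / (c * (θ ^ 2 / 4))
  set C := max (exp (c * u)) (A * max 3 B)
  have h3A : 3 * A ≤ C := by
    rw [mul_comm]
    exact (mul_le_mul_of_nonneg_left (le_max_left _ _) hA).trans (le_max_right _ _)
  refine ⟨C, (exp_pos _).trans_le (le_max_left _ _), fun m n hn => ?_⟩
  induction n using Nat.strong_induction_on generalizing m with
  | _ n ih =>
  intro t ht
  rcases le_or_gt (bernsteinExponent b γ n t) u with hsmall | hlarge
  · calc P.real (maxPartialSumExceeds X m n t) ≤ 1 := measureReal_le_one
      _ ≤ exp (c * u) * exp (-(c * bernsteinExponent b γ n t)) := by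
          rw [← exp_add]; exact one_le_exp (by nlinarith)
      _ ≤ C * exp (-(c * bernsteinExponent b γ n t)) := by gcongr; exact le_max_left _ _
  by_cases hunion : θ ^ 2 / 4 * n < max 1 (b * t ^ γ)
  · refine (measureReal_maxPartialSumExceeds_le_of_mul_exp_le P X hA (by linarith) hb hS m n ht
      ((hB n t (by exact_mod_cast hn) ht hunion).trans (le_max_right 3 B))).trans ?_
    gcongr
    exact le_max_right _ _
  replace hunion := not_lt.1 hunion
  obtain ⟨h, k, rfl, hh, hk1, hk2⟩ := exists_eq_add_of_one_le_mul hδ ((le_max_left _ _).trans hunion)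
  have hk : 1 ≤ k := by
    have : (1 : ℝ) ≤ k := ((le_max_left _ _).trans hunion).trans hk1
    exact_mod_cast this
  push_cast at hk1 hk2 hunion hlarge ⊢
  calc P.real (maxPartialSumExceeds X m (h + k) t)
      ≤ P.real (maxPartialSumExceeds X m h t) + P.real {ω | (1 - θ) * t < |partialSum X m h ω|} +
          P.real (maxPartialSumExceeds X (m + h) k (θ * t)) :=
        measureReal_maxPartialSumExceeds_add_le P X m h k θ t
    _ ≤ C * exp (-(c * bernsteinExponent b γ h t)) +
          A * exp (-(a * bernsteinExponent b γ h ((1 - θ) * t))) +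
          C * exp (-(c * bernsteinExponent b γ k (θ * t))) := by
        gcongr
        · exact ih h (by omega) m hh t ht
        · exact hS m h hh _ (mul_nonneg (by linarith) ht)
        · exact ih k (by omega) (m + h) hk _ (mul_nonneg hθ0.le ht)
    _ ≤ C * exp (-(c * bernsteinExponent b γ (h + k) t)) := by
        have hlog := (div_lt_iff₀ (by positivity)).1 hlarge
        exact add_exp_neg_bernsteinExponent_le hb hγ0.le ht (by linarith) hc.le hθ0 hθ1 hcθ hA
          h3A (by exact_mod_cast hh) hk1 (by linarith) ((le_max_right _ _).trans hunion)
          (by linarith)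

end PartialSums

end MaximalBernstein

open MaximalBernstein in
theorem maximal_bernstein_inequality_general
    {Ω : Type*} [MeasurableSpace Ω] (P : Measure Ω) [IsProbabilityMeasure P]
    (X : ℕ → Ω → ℝ) (A a b γ : ℝ)
    (hA : 0 < A) (hb : 0 ≤ b) (hγ0 : 0 < γ) (hγ2 : γ < 2)
    (hS : ∀ m n : ℕ, 1 ≤ n → ∀ t : ℝ, 0 ≤ t →
      (P {ω | t < |∑ i ∈ Finset.Icc (m + 1) (m + n), X i ω|}).toReal ≤
        A * Real.exp (-(a * t ^ 2) / (n + b * t ^ γ))) :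
    ∀ c : ℝ, 0 < c → c < a →
      ∃ C : ℝ, 0 < C ∧
        ∀ m n : ℕ, ∀ hn : 1 ≤ n, ∀ t : ℝ, 0 ≤ t →
          (P {ω | t < (Finset.Icc 1 n).sup' (Finset.nonempty_Icc.mpr hn)
              (fun j => |∑ i ∈ Finset.Icc (m + 1) (m + j), X i ω|)}).toReal ≤
            C * Real.exp (-(c * t ^ 2) / (n + b * t ^ γ)) := by
  intro c hc hca
  obtain ⟨C, hC, hbound⟩ := exists_measureReal_maxPartialSumExceeds_le P X hA.le hb hγ0 hγ2 hc hca
    fun m n hn t ht => by rw [neg_mul_bernsteinExponent]; exact hS m n hn t ht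
  refine ⟨C, hC, fun m n hn t ht => ?_⟩
  have := hbound m n hn t ht
  rwa [← setOf_lt_sup'_eq_maxPartialSumExceeds X m n hn, neg_mul_bernsteinExponent] at this

/-- Kevei–Mason maximal Bernstein-type inequality: if the partial sums
`S(m+1, m+n) = ∑_{i=m+1}^{m+n} X i` satisfy a Bernstein-type tail bound
`P{|S(m+1,m+n)| > t} ≤ A exp{-a t² / (n + b t^γ)}`, then for every `0 < c < a`
there is `C > 0` such that the maximum `M(m+1, m+n) = max_{1 ≤ j ≤ n} |S(m+1, m+j)|`
satisfies `P{M(m+1,m+n) > t} ≤ C exp{-c t² / (n + b t^γ)}`. -/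
theorem maximal_bernstein_inequality
    {Ω : Type*} [MeasurableSpace Ω] (P : Measure Ω) [IsProbabilityMeasure P]
    (X : ℕ → Ω → ℝ) (A a b γ : ℝ)
    (hA : 0 < A) (ha : 0 < a) (hb : 0 ≤ b) (hγ0 : 0 < γ) (hγ2 : γ < 2)
    (hS : ∀ m n : ℕ, 1 ≤ n → ∀ t : ℝ, 0 ≤ t →
      (P {ω | t < |∑ i ∈ Finset.Icc (m + 1) (m + n), X i ω|}).toReal ≤
        A * Real.exp (-(a * t ^ 2) / (n + b * t ^ γ))) :
    ∀ c : ℝ, 0 < c → c < a →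
      ∃ C : ℝ, 0 < C ∧
        ∀ m n : ℕ, ∀ hn : 1 ≤ n, ∀ t : ℝ, 0 ≤ t →
          (P {ω | t < (Finset.Icc 1 n).sup' (Finset.nonempty_Icc.mpr hn)
              (fun j => |∑ i ∈ Finset.Icc (m + 1) (m + j), X i ω|)}).toReal ≤
            C * Real.exp (-(c * t ^ 2) / (n + b * t ^ γ)) :=
  maximal_bernstein_inequality_general P X A a b γ hA hb hγ0 hγ2 hS
end

section
/- Let X₁, X₂, … be a sequence of real-valued random variables and suppose there exist constants D > 0, v > 0 and M > 0 such that for all integers m ≥ 0, n ≥ 1 and all t ≥ 0, P{|S(m+1, m+n)| ≥ t} ≤ D·exp( −D t² / (n v² + M² + t M (log n)²) ). Then for any 0 < c < 1 there exists a constant C ≥ D (depending on c, D/v² and the functions g_n(t) = M²/v² + (tM/v²)(log n)²) such that for all n ≥ 1 and t > 0, P{ max_{1 ≤ m ≤ n} |S(1,m)| ≥ t } ≤ C·exp( −c D t² / (n v² + M² + t M (log n)²) ). -/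
/-!
Write `E` for the Bernstein exponent of the whole sum at level `t`. If `E` is bounded the claim is
trivial, and if `log n ≤ (1 - c) E` the union bound over the `n` partial sums loses only the factor
`n ≤ exp ((1 - c) E)`. In the remaining regime, for large `n`, the term `t M (log n)²` is negligible
against `n v²`, so the exponent is essentially the Gaussian one `D t² / (n v²)`, and `b`-adic
chaining applies: at level `j` the maximum is cut into `b ^ (j + 1)` blocks of length about
`n b ^ (-j)` whose endpoints are charged the fraction `θ_j ≈ σ b ^ (-j / 2)` of `t`, with
`c ≤ σ² < 1`. A block then has exponent at least `c E + (j + 1) log (2 b)`, which pays for the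
number of blocks, while `∑ θ_j ≤ 1` once `b` is large.
-/

open MeasureTheory Finset Real Filter

section Chaining

variable {Ω : Type*} {X : ℕ → Ω → ℝ}

def maxPartialSumGe (X : ℕ → Ω → ℝ) (a r : ℕ) (τ : ℝ) : Set Ω :=
  {ω | ∃ k ∈ Icc 1 r, τ ≤ |∑ i ∈ Ioc a (a + k), X i ω|}

lemma maxPartialSumGe_subset_of_le_one {a r : ℕ} (hr : r ≤ 1) (τ : ℝ) :
    maxPartialSumGe X a r τ ⊆ {ω | τ ≤ |∑ i ∈ Ioc a (a + r), X i ω|} := by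
  rintro ω ⟨k, hk, hτ⟩
  obtain rfl : k = r := by rw [mem_Icc] at hk; omega
  exact hτ

lemma maxPartialSumGe_subset_biUnion {a r b h : ℕ} (hr : r ≤ b * h) (τ σ : ℝ) :
    maxPartialSumGe X a r τ ⊆ ⋃ i ∈ (range b).filter (· * h < r),
      ({ω | τ - σ ≤ |∑ j ∈ Ioc a (a + i * h), X j ω|} ∪ maxPartialSumGe X (a + i * h) h σ) := by
  rintro ω ⟨k, hk, hτ⟩
  rw [mem_Icc] at hk
  have hh : 0 < h := Nat.pos_of_ne_zero fun h0 => by simp [h0] at hr; omega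
  -- the block of length `h` containing `k` starts at `i * h`
  set i := (k - 1) / h
  have hik : i * h ≤ k - 1 := Nat.div_mul_le_self _ _
  have hki : k - 1 < i * h + h := Nat.lt_div_mul_add hh
  have hi : i < b := (Nat.div_lt_iff_lt_mul hh).2 (by omega)
  refine Set.mem_biUnion (mem_filter.2 ⟨mem_range.2 hi, by omega⟩) ?_
  have hsplit : ∑ j ∈ Ioc a (a + k), X j ω =
      ∑ j ∈ Ioc a (a + i * h), X j ω + ∑ j ∈ Ioc (a + i * h) (a + i * h + (k - i * h)), X j ω := by
    rw [show a + i * h + (k - i * h) = a + k by omega, sum_Ioc_consecutive _ (by omega) (by omega)]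
  by_cases hfirst : τ - σ ≤ |∑ j ∈ Ioc a (a + i * h), X j ω|
  · exact Or.inl hfirst
  · refine Or.inr ⟨k - i * h, mem_Icc.2 ⟨by omega, by omega⟩, ?_⟩
    have := abs_add_le (∑ j ∈ Ioc a (a + i * h), X j ω)
      (∑ j ∈ Ioc (a + i * h) (a + i * h + (k - i * h)), X j ω)
    rw [← hsplit] at this
    linarith

/-- At each level the maximum over `r ≤ ℓ 0` is cut into at most `b` blocks of length `ℓ 1`; the
threshold `u 0` is spent on the block endpoints and the rest on the maxima inside the blocks. -/
theorem measureReal_maxPartialSumGe_le_sum [MeasurableSpace Ω] {P : Measure Ω} [IsFiniteMeasure P]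
    {b : ℕ} (hb : 1 ≤ b) (J : ℕ)
    {ℓ : ℕ → ℕ} {u p : ℕ → ℝ} (hℓ : ∀ j < J, ℓ j ≤ b * ℓ (j + 1)) (hℓJ : ℓ J ≤ 1)
    (hblock : ∀ j ≤ J, ∀ a k, k ≤ ℓ j → ∀ s, u j ≤ s →
      P.real {ω | s ≤ |∑ i ∈ Ioc a (a + k), X i ω|} ≤ p j)
    {a r : ℕ} (hr : r ≤ ℓ 0) {τ : ℝ} (hτ : ∑ j ∈ range (J + 1), u j ≤ τ) :
    P.real (maxPartialSumGe X a r τ) ≤ ∑ j ∈ range (J + 1), (b : ℝ) ^ (j + 1) * p j := by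
  have hp : ∀ j ≤ J, 0 ≤ p j := fun j hj =>
    measureReal_nonneg.trans (hblock j hj 0 0 (Nat.zero_le _) (u j) le_rfl)
  induction J generalizing ℓ u p a r τ with
  | zero =>
    have hu : u 0 ≤ τ := by simpa using hτ
    calc P.real (maxPartialSumGe X a r τ)
        ≤ P.real {ω | τ ≤ |∑ i ∈ Ioc a (a + r), X i ω|} :=
          measureReal_mono (maxPartialSumGe_subset_of_le_one (hr.trans hℓJ) τ)
            (measure_ne_top _ _)
      _ ≤ p 0 := hblock 0 le_rfl a r hr τ hu
      _ ≤ ∑ j ∈ range 1, (b : ℝ) ^ (j + 1) * p j := by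
          simpa using le_mul_of_one_le_left (hp 0 le_rfl) (by exact_mod_cast hb)
  | succ J ih =>
    set σ := ∑ j ∈ range (J + 1), u (j + 1)
    have hσ : u 0 ≤ τ - σ := by rw [sum_range_succ'] at hτ; linarith
    set B := ∑ j ∈ range (J + 1), (b : ℝ) ^ (j + 1) * p (j + 1)
    have hB : 0 ≤ B := sum_nonneg fun j hj =>
      mul_nonneg (by positivity) (hp _ (by simp at hj; omega))
    have hpiece : ∀ i ∈ (range b).filter (· * ℓ 1 < r),
        P.real ({ω | τ - σ ≤ |∑ j ∈ Ioc a (a + i * ℓ 1), X j ω|} ∪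
          maxPartialSumGe X (a + i * ℓ 1) (ℓ 1) σ) ≤ p 0 + B := by
      intro i hi
      refine (measureReal_union_le _ _).trans (add_le_add ?_ ?_)
      · exact hblock 0 (Nat.zero_le _) a _ (by simp at hi; omega) _ hσ
      · exact ih (fun j hj => hℓ (j + 1) (by omega)) hℓJ
          (fun j hj => hblock (j + 1) (by omega)) le_rfl le_rfl
          (fun j hj => hp (j + 1) (by omega))
    calc P.real (maxPartialSumGe X a r τ)
        ≤ ∑ i ∈ (range b).filter (· * ℓ 1 < r), (p 0 + B) :=
          (measureReal_mono (maxPartialSumGe_subset_biUnion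
            (hr.trans (hℓ 0 (Nat.succ_pos J))) τ σ) (measure_ne_top _ _)).trans
            ((measureReal_biUnion_finset_le _ _).trans (sum_le_sum hpiece))
      _ ≤ b * (p 0 + B) := by
          rw [sum_const, nsmul_eq_mul]
          gcongr
          · exact add_nonneg (hp 0 (Nat.zero_le _)) hB
          · exact_mod_cast (card_filter_le _ _).trans (card_range b).le
      _ = ∑ j ∈ range (J + 1 + 1), (b : ℝ) ^ (j + 1) * p j := by
          rw [sum_range_succ', mul_add, mul_sum, add_comm]
          congr 1
          · exact sum_congr rfl fun j _ => by ring
          · ring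

end Chaining

section Bernstein

noncomputable def bernsteinExponent (D v M : ℝ) (n : ℕ) (t : ℝ) : ℝ :=
  D * t ^ 2 / (n * v ^ 2 + M ^ 2 + t * M * log n ^ 2)

lemma sq_div_add_mul_le_sq_div_add_mul {A B u s : ℝ} (hA : 0 < A) (hB : 0 ≤ B) (hu : 0 ≤ u)
    (hus : u ≤ s) : u ^ 2 / (A + u * B) ≤ s ^ 2 / (A + s * B) := by
  have hs : 0 ≤ s := hu.trans hus
  rw [div_le_div_iff₀ (by positivity) (by positivity)]
  nlinarith [mul_nonneg (mul_nonneg hA.le (sub_nonneg.2 hus)) (add_nonneg hu hs),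
    mul_nonneg (mul_nonneg hB (mul_nonneg hu hs)) (sub_nonneg.2 hus)]

variable {D v M : ℝ}

lemma bernsteinExponent_le_bernsteinExponent (hD : 0 ≤ D) (hv : 0 < v) (hM : 0 ≤ M) {k l : ℕ}
    (hk : 1 ≤ k) (hkl : k ≤ l) {u s : ℝ} (hu : 0 ≤ u) (hus : u ≤ s) :
    bernsteinExponent D v M l u ≤ bernsteinExponent D v M k s := by
  have hk' : (1 : ℝ) ≤ k := by exact_mod_cast hk
  have hk0 : (0 : ℝ) < k := by linarith
  have hkl' : (k : ℝ) ≤ l := by exact_mod_cast hkl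
  have hlog : log k ≤ log l := log_le_log (by positivity) hkl'
  have hlog0 : 0 ≤ log k := log_nonneg hk'
  have hA : 0 < k * v ^ 2 + M ^ 2 := by positivity
  unfold bernsteinExponent
  calc D * u ^ 2 / (l * v ^ 2 + M ^ 2 + u * M * log l ^ 2)
      ≤ D * u ^ 2 / (k * v ^ 2 + M ^ 2 + u * M * log k ^ 2) := by
        gcongr
    _ = D * (u ^ 2 / ((k * v ^ 2 + M ^ 2) + u * (M * log k ^ 2))) := by ring_nf
    _ ≤ D * (s ^ 2 / ((k * v ^ 2 + M ^ 2) + s * (M * log k ^ 2))) := by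
        have hB : 0 ≤ M * log k ^ 2 := by positivity
        exact mul_le_mul_of_nonneg_left (sq_div_add_mul_le_sq_div_add_mul hA hB hu hus) hD
    _ = D * s ^ 2 / (k * v ^ 2 + M ^ 2 + s * M * log k ^ 2) := by ring_nf

lemma mul_bernsteinExponent_le (hD : 0 ≤ D) (hv : 0 < v) (hM : 0 ≤ M) {ℓ n : ℕ} (hℓ : 1 ≤ ℓ)
    (hℓn : ℓ ≤ n) {c' θ t : ℝ} (hc' : 0 ≤ c') (hθ : 0 ≤ θ) (ht : 0 ≤ t)
    (h : c' * (ℓ * v ^ 2 + M ^ 2 + θ * t * M * log n ^ 2) ≤ θ ^ 2 * (n * v ^ 2)) :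
    c' * bernsteinExponent D v M n t ≤ bernsteinExponent D v M ℓ (θ * t) := by
  have hℓ' : (1 : ℝ) ≤ ℓ := by exact_mod_cast hℓ
  have hℓn' : (ℓ : ℝ) ≤ n := by exact_mod_cast hℓn
  have hlog : log ℓ ≤ log n := log_le_log (by positivity) hℓn'
  have hlog0 : 0 ≤ log ℓ := log_nonneg hℓ'
  have hQℓ : 0 < ℓ * v ^ 2 + M ^ 2 + θ * t * M * log ℓ ^ 2 := by
    have : (0 : ℝ) < ℓ := by positivity
    positivity
  have hQ : 0 < n * v ^ 2 + M ^ 2 + t * M * log n ^ 2 := by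
    have : (0 : ℝ) < n := by linarith
    positivity
  have hden : c' * (ℓ * v ^ 2 + M ^ 2 + θ * t * M * log ℓ ^ 2) ≤
      θ ^ 2 * (n * v ^ 2 + M ^ 2 + t * M * log n ^ 2) := by
    calc c' * (ℓ * v ^ 2 + M ^ 2 + θ * t * M * log ℓ ^ 2)
        ≤ c' * (ℓ * v ^ 2 + M ^ 2 + θ * t * M * log n ^ 2) := by gcongr
      _ ≤ θ ^ 2 * (n * v ^ 2) := h
      _ ≤ θ ^ 2 * (n * v ^ 2 + M ^ 2 + t * M * log n ^ 2) := by
          gcongr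
          nlinarith [sq_nonneg (log n), mul_nonneg ht hM]
  unfold bernsteinExponent
  rw [mul_div_assoc', div_le_div_iff₀ hQ hQℓ]
  calc c' * (D * t ^ 2) * (ℓ * v ^ 2 + M ^ 2 + θ * t * M * log ℓ ^ 2)
      = D * t ^ 2 * (c' * (ℓ * v ^ 2 + M ^ 2 + θ * t * M * log ℓ ^ 2)) := by ring
    _ ≤ D * t ^ 2 * (θ ^ 2 * (n * v ^ 2 + M ^ 2 + t * M * log n ^ 2)) := by gcongr
    _ = D * (θ * t) ^ 2 * (n * v ^ 2 + M ^ 2 + t * M * log n ^ 2) := by ring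

/-- Outside the union-bound regime, and for large `n`, the term `t M (log n)²` is negligible against
`n v²`. -/
lemma mul_log_pow_four_le_of_lt_log (hD : 0 < D) (hv : 0 < v) (hM : 0 < M) {n : ℕ} {t δ : ℝ}
    (ht : 0 < t) (hδ : 0 < δ) (hL : 1 ≤ log n) (hn₁ : M ^ 2 / v ^ 2 ≤ n)
    (hn₂ : 3 * M ^ 2 / (δ * D * v ^ 2) * log n ^ 9 ≤ n)
    (hE : δ * bernsteinExponent D v M n t < log n) :
    t * M * log n ^ 4 ≤ n * v ^ 2 := by
  set L := log n
  by_contra! htM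
  have hMn : M ^ 2 ≤ n * v ^ 2 := (div_le_iff₀ (by positivity)).1 hn₁
  have hQ : n * v ^ 2 + M ^ 2 + t * M * L ^ 2 ≤ 3 * (t * M * L ^ 4) := by
    have : t * M * L ^ 2 ≤ t * M * L ^ 4 :=
      mul_le_mul_of_nonneg_left (pow_le_pow_right₀ hL (by norm_num)) (by positivity)
    linarith
  have hQ0 : 0 < n * v ^ 2 + M ^ 2 + t * M * L ^ 2 := by positivity
  have hDt : δ * D * t < 3 * M * L ^ 5 := by
    have h : δ * (D * t ^ 2) < L * (n * v ^ 2 + M ^ 2 + t * M * L ^ 2) := by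
      rwa [bernsteinExponent, ← mul_div_assoc, div_lt_iff₀ hQ0] at hE
    have h' : δ * D * t * t < 3 * M * L ^ 5 * t := by
      nlinarith [mul_le_mul_of_nonneg_left hQ (by linarith : (0 : ℝ) ≤ L)]
    exact lt_of_mul_lt_mul_right h' ht.le
  have hn : 3 * M ^ 2 * L ^ 9 ≤ δ * D * (n * v ^ 2) := by
    rw [div_mul_eq_mul_div, div_le_iff₀ (by positivity)] at hn₂
    linarith
  have : δ * D * (n * v ^ 2) < 3 * M ^ 2 * L ^ 9 := calc
    δ * D * (n * v ^ 2) < δ * D * (t * M * L ^ 4) := by gcongr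
    _ = (δ * D * t) * (M * L ^ 4) := by ring
    _ ≤ (3 * M * L ^ 5) * (M * L ^ 4) := by gcongr
    _ = 3 * M ^ 2 * L ^ 9 := by ring
  linarith

lemma eventually_mul_log_pow_le (A : ℝ) (p : ℕ) : ∀ᶠ n : ℕ in atTop, A * log n ^ p ≤ n := by
  have h := (isLittleO_pow_log_id_atTop (n := p)).def (c := 1 / (|A| + 1)) (by positivity)
  filter_upwards [tendsto_natCast_atTop_atTop.eventually h] with n hn
  rw [norm_pow, Real.norm_eq_abs, id, Real.norm_natCast] at hn
  calc A * log n ^ p ≤ |A| * |log n| ^ p := by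
        rw [← abs_pow, ← abs_mul]; exact le_abs_self _
    _ ≤ |A| * (1 / (|A| + 1) * n) := by gcongr
    _ ≤ n := by
        rw [← mul_assoc, mul_one_div]
        exact mul_le_of_le_one_left (Nat.cast_nonneg n)
          ((div_le_one (by positivity)).2 (by linarith))

lemma natCast_le_pow_ceil_log {b : ℝ} (hb : exp 1 ≤ b) (n : ℕ) : (n : ℝ) ≤ b ^ ⌈log n⌉₊ := by
  rcases Nat.eq_zero_or_pos n with rfl | hn
  · simp only [CharP.cast_eq_zero]
    exact pow_nonneg ((exp_pos 1).trans_le hb).le _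
  calc (n : ℝ) = exp (log n) := (exp_log (by positivity)).symm
    _ ≤ exp ⌈log n⌉₊ := exp_le_exp.2 (Nat.le_ceil _)
    _ = exp 1 ^ ⌈log n⌉₊ := by rw [← exp_nat_mul, mul_one]
    _ ≤ b ^ ⌈log n⌉₊ := by gcongr

lemma natCast_mul_exp_neg_le {c E : ℝ} {n : ℕ} (h : log n ≤ (1 - c) * E) :
    n * exp (-E) ≤ exp (-(c * E)) := by
  rcases Nat.eq_zero_or_pos n with rfl | hn
  · simpa using (exp_pos _).le
  · rw [← exp_log (Nat.cast_pos.2 hn), ← exp_add]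
    exact exp_le_exp.2 (by linarith)

end Bernstein

section Weights

variable {D v M : ℝ}

lemma sum_add_mul_mul_pow_le {σ q r : ℝ} (hσ : 0 ≤ σ) (hσ1 : σ ≤ 1) (hq : 0 ≤ q) (hq1 : q ≤ 1 / 4)
    (hr : 0 ≤ r) (m : ℕ) :
    ∑ j ∈ range m, (σ + (j + 1) * r) * q ^ j ≤ σ + 2 * q + 2 * r := by
  have hgeom : ∑ j ∈ range m, q ^ j ≤ 1 / (1 - q) := by
    simpa using geom_sum_Ico_le_of_lt_one (m := 0) (n := m) hq (by linarith)
  have hlin : ∑ j ∈ range m, ((j : ℝ) + 1) * q ^ j ≤ 2 := calc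
    ∑ j ∈ range m, ((j : ℝ) + 1) * q ^ j ≤ ∑ j ∈ range m, (2 * q) ^ j := by
      refine sum_le_sum fun j _ => ?_
      rw [mul_pow]
      gcongr
      exact_mod_cast Nat.lt_two_pow_self
    _ ≤ 1 / (1 - 2 * q) := by
      simpa using
        geom_sum_Ico_le_of_lt_one (m := 0) (n := m) (by positivity : 0 ≤ 2 * q) (by linarith)
    _ ≤ 2 := by rw [div_le_iff₀ (by linarith)]; linarith
  have hσq : σ * (1 / (1 - q)) ≤ σ + 2 * q := by
    rw [mul_one_div, div_le_iff₀ (by linarith)]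
    nlinarith
  calc ∑ j ∈ range m, (σ + (j + 1) * r) * q ^ j
      = σ * ∑ j ∈ range m, q ^ j + r * ∑ j ∈ range m, ((j : ℝ) + 1) * q ^ j := by
        rw [mul_sum, mul_sum, ← sum_add_distrib]
        exact sum_congr rfl fun j _ => by ring
    _ ≤ σ * (1 / (1 - q)) + r * 2 := by gcongr
    _ ≤ σ + 2 * q + 2 * r := by linarith

/-- The fraction of the threshold spent at level `j` of the chaining: `q ^ j` is the square root of
the relative block length `b ^ (-j)`, the coefficient `c + (j + 1) (ε / 2) ^ 2` pays for the
`b ^ (j + 1)` blocks of the level, and the two terms in `1 / L ^ 2` (with `L = log n`) absorb the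
rounding of the block lengths, `M²` and `t M (log n)²`. -/
noncomputable def chainingWeight (σ c ε L q : ℝ) (j : ℕ) : ℝ :=
  (σ + (j + 1) * (ε / 2)) * (q ^ j + ε / (4 * L ^ 2)) + (c + (j + 1) * (ε / 2) ^ 2) / L ^ 2

lemma chainingWeight_pos {σ c ε L q : ℝ} (hσ : 0 ≤ σ) (hc : 0 ≤ c) (hε : 0 < ε) (hL : 0 < L)
    (hq : 0 ≤ q) (j : ℕ) : 0 < chainingWeight σ c ε L q j := by
  unfold chainingWeight
  positivity

lemma sum_chainingWeight_le {σ c ε L q : ℝ} {J : ℕ} (hσ : 0 ≤ σ) (hσ1 : σ ≤ 1) (hc1 : c ≤ 1)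
    (hε : 0 < ε) (hε1 : ε ≤ 1 / 2) (hq : 0 ≤ q) (hqε : 2 * q ≤ ε) (hL : 2 / ε ≤ L)
    (hJ : (J : ℝ) + 1 ≤ 2 * L) :
    ∑ j ∈ range (J + 1), chainingWeight σ c ε L q j ≤ σ + 5 * ε := by
  have hL1 : 1 ≤ L := le_trans (by rw [le_div_iff₀ hε]; linarith) hL
  have hL0 : 0 < L := by linarith
  have hj : ∀ j ∈ range (J + 1), (j : ℝ) + 1 ≤ 2 * L := fun j hj =>
    le_trans (by exact_mod_cast mem_range.1 hj) hJ
  have hmain :=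
    sum_add_mul_mul_pow_le hσ hσ1 hq (by linarith) (by positivity : 0 ≤ ε / 2) (J + 1)
  have hmid : ∑ j ∈ range (J + 1), (σ + (j + 1) * (ε / 2)) * (ε / (4 * L ^ 2)) ≤ ε := calc
    _ ≤ ∑ j ∈ range (J + 1), 2 * L * (ε / (4 * L ^ 2)) := by
      refine sum_le_sum fun j hj' => ?_
      gcongr
      nlinarith [hj j hj']
    _ ≤ ε := by
      rw [sum_const, card_range, nsmul_eq_mul]
      calc ((J + 1 : ℕ) : ℝ) * (2 * L * (ε / (4 * L ^ 2)))
          ≤ 2 * L * (2 * L * (ε / (4 * L ^ 2))) := by push_cast; gcongr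
        _ = ε := by field_simp; ring
  have hlast : ∑ j ∈ range (J + 1), (c + (j + 1) * (ε / 2) ^ 2) / L ^ 2 ≤ 2 * ε := calc
    _ ≤ ∑ j ∈ range (J + 1), (1 + 2 * L * (ε / 2) ^ 2) / L ^ 2 := by
      refine sum_le_sum fun j hj' => ?_
      gcongr
      nlinarith [hj j hj']
    _ ≤ 2 * ε := by
      rw [sum_const, card_range, nsmul_eq_mul]
      calc ((J + 1 : ℕ) : ℝ) * ((1 + 2 * L * (ε / 2) ^ 2) / L ^ 2)
          ≤ 2 * L * ((1 + 2 * L * (ε / 2) ^ 2) / L ^ 2) := by push_cast; gcongr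
        _ = 2 / L + ε ^ 2 := by field_simp
        _ ≤ 2 * ε := by
          have : 2 / L ≤ ε := by rw [div_le_iff₀ hL0]; rwa [div_le_iff₀ hε, mul_comm] at hL
          nlinarith
  calc ∑ j ∈ range (J + 1), chainingWeight σ c ε L q j
      = ∑ j ∈ range (J + 1), (σ + (j + 1) * (ε / 2)) * q ^ j
        + ∑ j ∈ range (J + 1), (σ + (j + 1) * (ε / 2)) * (ε / (4 * L ^ 2))
        + ∑ j ∈ range (J + 1), (c + (j + 1) * (ε / 2) ^ 2) / L ^ 2 := by
        simp only [chainingWeight, mul_add, sum_add_distrib]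
    _ ≤ σ + 5 * ε := by linarith

lemma mul_add_le_sq_of_le_sq {s c' x y w : ℝ} (hs : 0 ≤ s) (hc' : 0 ≤ c') (hcs : c' ≤ s ^ 2)
    (hx : 0 ≤ x) (hy : 0 ≤ y) (hw : 0 ≤ w) :
    c' * (x ^ 2 + y ^ 2 + (s * (x + y) + c' * w) * w) ≤ (s * (x + y) + c' * w) ^ 2 := by
  nlinarith [mul_nonneg (sub_nonneg.2 hcs) (add_nonneg (sq_nonneg x) (sq_nonneg y)),
    mul_nonneg (mul_nonneg hs hs) (mul_nonneg hx hy), mul_nonneg (mul_nonneg hc' hs)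
      (mul_nonneg (add_nonneg hx hy) hw)]

lemma ceil_div_pow_le_mul_ceil_div_pow {b : ℕ} (hb : 0 < b) (x : ℝ) (j : ℕ) :
    ⌈x / (b : ℝ) ^ j⌉₊ ≤ b * ⌈x / (b : ℝ) ^ (j + 1)⌉₊ := by
  rw [Nat.ceil_le]
  push_cast
  calc x / (b : ℝ) ^ j = b * (x / (b : ℝ) ^ (j + 1)) := by field_simp; ring
    _ ≤ b * ⌈x / (b : ℝ) ^ (j + 1)⌉₊ := by gcongr; exact Nat.le_ceil _

lemma sum_pow_mul_div_two_mul_pow_le {b A : ℝ} (hb : 0 < b) (hA : 0 ≤ A) (N : ℕ) :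
    ∑ j ∈ range N, b ^ (j + 1) * (A / (2 * b) ^ (j + 1)) ≤ A := by
  calc ∑ j ∈ range N, b ^ (j + 1) * (A / (2 * b) ^ (j + 1))
      = A / 2 * ∑ j ∈ range N, (1 / 2 : ℝ) ^ j := by
        rw [mul_sum]
        refine sum_congr rfl fun j _ => ?_
        rw [one_div, inv_pow, mul_pow, pow_succ 2]
        field_simp
    _ ≤ A / 2 * 2 := by gcongr; exact sum_geometric_two_le N
    _ = A := by ring

lemma natCeil_div_sq_pow_le (x : ℝ) (m j : ℕ) (hx : 0 ≤ x) :
    (⌈x / ((m : ℝ) ^ 2) ^ j⌉₊ : ℝ) ≤ x * (((m : ℝ)⁻¹) ^ j) ^ 2 + 1 := by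
  have h : x / ((m : ℝ) ^ 2) ^ j = x * (((m : ℝ)⁻¹) ^ j) ^ 2 := by
    simp only [inv_pow, ← pow_mul, div_eq_mul_inv]
    ring_nf
  rw [← h]
  exact (Nat.ceil_lt_add_one (by positivity)).le

lemma sq_add_sq_le_of_mul_log_pow_le {v M ε L : ℝ} {n : ℕ} (hv : 0 < v) (hε : 0 < ε) (hL : 0 < L)
    (hn : 16 * (1 + M ^ 2 / v ^ 2) / ε ^ 2 * L ^ 4 ≤ n) :
    v ^ 2 + M ^ 2 ≤ n * v ^ 2 * (ε / (4 * L ^ 2)) ^ 2 := by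
  have h : 1 + M ^ 2 / v ^ 2 ≤ n * (ε / (4 * L ^ 2)) ^ 2 := by
    rw [div_mul_eq_mul_div, div_le_iff₀ (by positivity)] at hn
    rw [div_pow, mul_pow, ← mul_div_assoc, le_div_iff₀ (by positivity)]
    linarith
  calc v ^ 2 + M ^ 2 = v ^ 2 * (1 + M ^ 2 / v ^ 2) := by field_simp
    _ ≤ v ^ 2 * (n * (ε / (4 * L ^ 2)) ^ 2) := by gcongr
    _ = n * v ^ 2 * (ε / (4 * L ^ 2)) ^ 2 := by ring

lemma mul_bernsteinExponent_le_chainingWeight (hD : 0 ≤ D) (hv : 0 < v) (hM : 0 ≤ M)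
    {c σ ε t : ℝ} {m n : ℕ} (hc : 0 ≤ c) (hσ : 0 ≤ σ) (hcσ : c ≤ σ ^ 2) (hε : 0 < ε)
    (hm : 1 ≤ m) (hn : 1 ≤ n) (hL : 0 < log n) (ht : 0 < t)
    (hz : 16 * (1 + M ^ 2 / v ^ 2) / ε ^ 2 * log n ^ 4 ≤ n)
    (htM : t * M * log n ^ 4 ≤ n * v ^ 2) (j : ℕ) :
    (c + (j + 1) * (ε / 2) ^ 2) * bernsteinExponent D v M n t ≤
      bernsteinExponent D v M ⌈(n : ℝ) / ((m : ℝ) ^ 2) ^ j⌉₊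
        (chainingWeight σ c ε (log n) (m : ℝ)⁻¹ j * t) := by
  set L := log n
  set s := σ + (j + 1) * (ε / 2)
  set c' := c + (j + 1) * (ε / 2) ^ 2
  set x := ((m : ℝ)⁻¹) ^ j
  set y := ε / (4 * L ^ 2)
  set θ := chainingWeight σ c ε L (m : ℝ)⁻¹ j
  have hθ : θ = s * (x + y) + c' * (1 / L ^ 2) := by simp only [θ, chainingWeight]; ring
  have hθ0 : 0 ≤ θ := (chainingWeight_pos hσ hc hε hL (by positivity) j).le
  have hm' : (1 : ℝ) ≤ m := by exact_mod_cast hm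
  have hn' : (1 : ℝ) ≤ n := by exact_mod_cast hn
  set ℓ := ⌈(n : ℝ) / ((m : ℝ) ^ 2) ^ j⌉₊
  have hℓ1 : 1 ≤ ℓ := Nat.one_le_ceil_iff.2 (by positivity)
  have hℓn : ℓ ≤ n := Nat.ceil_le.2 (div_le_self (by positivity) (one_le_pow₀ (by nlinarith)))
  have hℓ : (ℓ : ℝ) * v ^ 2 ≤ n * v ^ 2 * x ^ 2 + v ^ 2 := by
    nlinarith [mul_le_mul_of_nonneg_right (natCeil_div_sq_pow_le n m j (Nat.cast_nonneg n))
      (sq_nonneg v)]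
  have hy : v ^ 2 + M ^ 2 ≤ n * v ^ 2 * y ^ 2 := sq_add_sq_le_of_mul_log_pow_le hv hε hL hz
  have hw : θ * t * M * L ^ 2 ≤ n * v ^ 2 * (θ * (1 / L ^ 2)) := by
    have h : t * M * L ^ 2 ≤ n * v ^ 2 / L ^ 2 := by
      rw [le_div_iff₀ (by positivity)]; linarith
    calc θ * t * M * L ^ 2 = θ * (t * M * L ^ 2) := by ring
      _ ≤ θ * (n * v ^ 2 / L ^ 2) := by gcongr
      _ = n * v ^ 2 * (θ * (1 / L ^ 2)) := by ring
  have hsq : c' * (x ^ 2 + y ^ 2 + θ * (1 / L ^ 2)) ≤ θ ^ 2 := by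
    rw [hθ]
    refine mul_add_le_sq_of_le_sq (by positivity) (by positivity) ?_ (by positivity)
      (by positivity) (by positivity)
    have hj : ((j : ℝ) + 1) ≤ ((j : ℝ) + 1) ^ 2 := by nlinarith
    simp only [s, c']
    nlinarith [mul_nonneg (mul_nonneg hσ (by positivity : (0 : ℝ) ≤ j + 1)) hε.le,
      mul_le_mul_of_nonneg_right hj (sq_nonneg (ε / 2))]
  refine mul_bernsteinExponent_le hD hv hM hℓ1 hℓn (by positivity) hθ0 ht.le ?_
  calc c' * (ℓ * v ^ 2 + M ^ 2 + θ * t * M * L ^ 2)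
      ≤ c' * (n * v ^ 2 * (x ^ 2 + y ^ 2 + θ * (1 / L ^ 2))) := by
        gcongr
        nlinarith
    _ = n * v ^ 2 * (c' * (x ^ 2 + y ^ 2 + θ * (1 / L ^ 2))) := by ring
    _ ≤ n * v ^ 2 * θ ^ 2 := by gcongr
    _ = θ ^ 2 * (n * v ^ 2) := by ring

lemma exp_neg_bernsteinExponent_chainingWeight_le (hD : 0 ≤ D) (hv : 0 < v) (hM : 0 ≤ M)
    {c σ ε t : ℝ} {m n : ℕ} (hc : 0 ≤ c) (hσ : 0 ≤ σ) (hcσ : c ≤ σ ^ 2) (hε : 0 < ε)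
    (hm : 1 ≤ m) (hn : 1 ≤ n) (hL : 0 < log n) (ht : 0 < t)
    (hz : 16 * (1 + M ^ 2 / v ^ 2) / ε ^ 2 * log n ^ 4 ≤ n)
    (htM : t * M * log n ^ 4 ≤ n * v ^ 2)
    (hE : 4 * log (2 * m ^ 2) / ε ^ 2 ≤ bernsteinExponent D v M n t) (j : ℕ) :
    exp (-bernsteinExponent D v M ⌈(n : ℝ) / ((m : ℝ) ^ 2) ^ j⌉₊
        (chainingWeight σ c ε (log n) (m : ℝ)⁻¹ j * t)) ≤
      exp (-(c * bernsteinExponent D v M n t)) / (2 * m ^ 2) ^ (j + 1) := by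
  set E := bernsteinExponent D v M n t
  have hlevel := mul_bernsteinExponent_le_chainingWeight hD hv hM hc hσ hcσ hε hm hn hL ht hz
    htM (m := m) j
  have hβ : log (2 * m ^ 2) ≤ (ε / 2) ^ 2 * E := by
    rw [div_le_iff₀ (by positivity)] at hE
    linarith
  have hpow : exp ((j + 1) * log (2 * m ^ 2)) = (2 * m ^ 2 : ℝ) ^ (j + 1) := by
    rw [show ((j : ℝ) + 1) = ((j + 1 : ℕ) : ℝ) by push_cast; ring, ← log_pow,
      exp_log (by positivity)]
  calc exp (-bernsteinExponent D v M ⌈(n : ℝ) / ((m : ℝ) ^ 2) ^ j⌉₊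
        (chainingWeight σ c ε (log n) (m : ℝ)⁻¹ j * t))
      ≤ exp (-(c * E + (j + 1) * log (2 * m ^ 2))) := by
        gcongr
        nlinarith [mul_le_mul_of_nonneg_left hβ (by positivity : (0 : ℝ) ≤ j + 1)]
    _ = exp (-(c * E)) / (2 * m ^ 2) ^ (j + 1) := by
        rw [neg_add, exp_add, exp_neg ((j + 1) * _), hpow, div_eq_mul_inv]

end Weights

section TailBound

variable {Ω : Type*} [MeasurableSpace Ω] {P : Measure Ω} {X : ℕ → Ω → ℝ} {D v M : ℝ}

def BernsteinTailBound (P : Measure Ω) (X : ℕ → Ω → ℝ) (D v M : ℝ) : Prop :=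
  ∀ a k : ℕ, 1 ≤ k → ∀ s : ℝ, 0 ≤ s →
    P.real {ω | s ≤ |∑ i ∈ Ioc a (a + k), X i ω|} ≤ D * exp (-bernsteinExponent D v M k s)

namespace BernsteinTailBound

lemma measureReal_le (hT : BernsteinTailBound P X D v M) (hD : 0 ≤ D) (hv : 0 < v)
    (hM : 0 ≤ M) {a k l : ℕ} (hkl : k ≤ l) {u s : ℝ} (hu : 0 < u) (hus : u ≤ s) :
    P.real {ω | s ≤ |∑ i ∈ Ioc a (a + k), X i ω|} ≤ D * exp (-bernsteinExponent D v M l u) := by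
  rcases Nat.eq_zero_or_pos k with rfl | hk
  · have hempty : {ω | s ≤ |∑ i ∈ Ioc a (a + 0), X i ω|} = ∅ := by
      ext ω
      simp only [add_zero, Ioc_self, sum_empty, abs_zero, Set.mem_ofPred_eq,
        Set.mem_empty_iff_false, iff_false, not_le]
      linarith
    rw [hempty, measureReal_empty]
    positivity
  · refine (hT a k hk s (hu.le.trans hus)).trans ?_
    gcongr
    exact bernsteinExponent_le_bernsteinExponent hD hv hM hk hkl hu.le hus

lemma measureReal_maxPartialSumGe_le_mul [IsFiniteMeasure P] (hT : BernsteinTailBound P X D v M)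
    (hD : 0 ≤ D) (hv : 0 < v) (hM : 0 ≤ M) (a n : ℕ) {t : ℝ} (ht : 0 < t) :
    P.real (maxPartialSumGe X a n t) ≤ n * (D * exp (-bernsteinExponent D v M n t)) := by
  have hsub : maxPartialSumGe X a n t ⊆ ⋃ k ∈ Icc 1 n, {ω | t ≤ |∑ i ∈ Ioc a (a + k), X i ω|} :=
    fun ω ⟨k, hk, hkt⟩ => Set.mem_biUnion hk hkt
  calc P.real (maxPartialSumGe X a n t)
      ≤ ∑ k ∈ Icc 1 n, P.real {ω | t ≤ |∑ i ∈ Ioc a (a + k), X i ω|} :=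
        (measureReal_mono hsub (measure_ne_top _ _)).trans (measureReal_biUnion_finset_le _ _)
    _ ≤ ∑ k ∈ Icc 1 n, D * exp (-bernsteinExponent D v M n t) :=
        sum_le_sum fun k hk => hT.measureReal_le hD hv hM (mem_Icc.1 hk).2 ht le_rfl
    _ = n * (D * exp (-bernsteinExponent D v M n t)) := by simp

theorem measureReal_maxPartialSumGe_le_of_mul_log_pow_four_le [IsFiniteMeasure P]
    (hT : BernsteinTailBound P X D v M) (hD : 0 ≤ D) (hv : 0 < v) (hM : 0 ≤ M)
    {c σ ε t : ℝ} {m n : ℕ} (hc : 0 ≤ c) (hσ : 0 ≤ σ) (hcσ : c ≤ σ ^ 2) (hε : 0 < ε)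
    (hσε : σ + 5 * ε ≤ 1) (hm : 2 ≤ ε * m) (hL : 2 / ε ≤ log n) (ht : 0 < t)
    (hz : 16 * (1 + M ^ 2 / v ^ 2) / ε ^ 2 * log n ^ 4 ≤ n)
    (htM : t * M * log n ^ 4 ≤ n * v ^ 2)
    (hE : 4 * log (2 * m ^ 2) / ε ^ 2 ≤ bernsteinExponent D v M n t) :
    P.real (maxPartialSumGe X 0 n t) ≤ D * exp (-(c * bernsteinExponent D v M n t)) := by
  set L := log n
  set E := bernsteinExponent D v M n t
  have hε1 : ε ≤ 1 / 5 := by linarith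
  have hσ1 : σ ≤ 1 := by linarith
  have hc1 : c ≤ 1 := hcσ.trans (by nlinarith)
  have hm10 : (10 : ℝ) ≤ m := by nlinarith [(Nat.cast_nonneg m : (0 : ℝ) ≤ m)]
  have hm1 : 1 ≤ m := by exact_mod_cast (by linarith : (1 : ℝ) ≤ m)
  have hq : 2 * (m : ℝ)⁻¹ ≤ ε := by
    rw [← div_eq_mul_inv, div_le_iff₀ (by linarith)]; linarith
  have hL10 : 10 ≤ L := le_trans (by rw [le_div_iff₀ hε]; linarith) hL
  have hn1 : 1 ≤ n := Nat.one_le_iff_ne_zero.2 fun hn => by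
    simp [L, hn] at hL10; linarith
  set J := ⌈L⌉₊
  have hJ : (J : ℝ) + 1 ≤ 2 * L := by linarith [Nat.ceil_lt_add_one (by linarith : 0 ≤ L)]
  have hnJ : (n : ℝ) / ((m : ℝ) ^ 2) ^ J ≤ 1 := by
    rw [div_le_one (by positivity)]
    exact natCast_le_pow_ceil_log (by nlinarith [exp_one_lt_d9]) n
  have hblock : ∀ j ≤ J, ∀ a k, k ≤ ⌈(n : ℝ) / ((m : ℝ) ^ 2) ^ j⌉₊ → ∀ s,
      chainingWeight σ c ε L (m : ℝ)⁻¹ j * t ≤ s →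
      P.real {ω | s ≤ |∑ i ∈ Ioc a (a + k), X i ω|} ≤
        D * exp (-(c * E)) / (2 * (m : ℝ) ^ 2) ^ (j + 1) := fun j _ a k hk s hs => by
    rw [mul_div_assoc]
    refine (hT.measureReal_le hD hv hM hk (mul_pos
      (chainingWeight_pos hσ hc hε (by linarith) (by positivity) j) ht) hs).trans ?_
    gcongr
    exact exp_neg_bernsteinExponent_chainingWeight_le hD hv hM hc hσ hcσ hε hm1 hn1
      (by linarith) ht hz htM hE j
  have hsum : ∑ j ∈ range (J + 1), chainingWeight σ c ε L (m : ℝ)⁻¹ j * t ≤ t := by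
    rw [← sum_mul]
    nlinarith [sum_chainingWeight_le hσ hσ1 hc1 hε (by linarith) (by positivity) hq hL hJ]
  calc P.real (maxPartialSumGe X 0 n t)
      ≤ ∑ j ∈ range (J + 1), ((m ^ 2 : ℕ) : ℝ) ^ (j + 1) *
          (D * exp (-(c * E)) / (2 * (m : ℝ) ^ 2) ^ (j + 1)) :=
        measureReal_maxPartialSumGe_le_sum (b := m ^ 2) (Nat.one_le_pow _ _ hm1) J
          (ℓ := fun j => ⌈(n : ℝ) / ((m : ℝ) ^ 2) ^ j⌉₊)
          (fun j _ => by
            exact_mod_cast ceil_div_pow_le_mul_ceil_div_pow (b := m ^ 2) (by positivity) n j)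
          (Nat.ceil_le.2 (by simpa using hnJ)) hblock (by simp) hsum
    _ ≤ D * exp (-(c * E)) := by
        push_cast
        exact sum_pow_mul_div_two_mul_pow_le (by positivity) (by positivity) _

theorem exists_eventually_measureReal_maxPartialSumGe_le [IsFiniteMeasure P]
    (hT : BernsteinTailBound P X D v M) (hD : 0 < D) (hv : 0 < v) (hM : 0 < M) {c : ℝ}
    (hc : 0 < c) (hc1 : c < 1) :
    ∃ K, ∀ᶠ n : ℕ in atTop, ∀ t, 0 < t → K ≤ bernsteinExponent D v M n t →
      P.real (maxPartialSumGe X 0 n t) ≤ D * exp (-(c * bernsteinExponent D v M n t)) := by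
  set ε := (1 - c) / 10 with hε_def
  have hε : 0 < ε := by positivity
  obtain ⟨m, hm⟩ : ∃ m : ℕ, 2 ≤ ε * m :=
    ⟨⌈2 / ε⌉₊, by rw [mul_comm, ← div_le_iff₀ hε]; exact Nat.le_ceil _⟩
  refine ⟨4 * log (2 * m ^ 2) / ε ^ 2, ?_⟩
  filter_upwards [eventually_mul_log_pow_le (M ^ 2 / v ^ 2) 0,
    eventually_mul_log_pow_le (3 * M ^ 2 / ((1 - c) * D * v ^ 2)) 9,
    eventually_mul_log_pow_le (16 * (1 + M ^ 2 / v ^ 2) / ε ^ 2) 4,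
    (tendsto_log_atTop.comp tendsto_natCast_atTop_atTop).eventually_ge_atTop (2 / ε)]
    with n hn₁ hn₂ hz hL t ht hE
  have hL1 : 1 ≤ log n := le_trans (by rw [le_div_iff₀ hε]; linarith) hL
  rcases le_or_gt (log n) ((1 - c) * bernsteinExponent D v M n t) with hsmall | hlarge
  · calc P.real (maxPartialSumGe X 0 n t)
        ≤ n * (D * exp (-bernsteinExponent D v M n t)) :=
          hT.measureReal_maxPartialSumGe_le_mul hD.le hv hM.le 0 n ht
      _ = D * (n * exp (-bernsteinExponent D v M n t)) := by ring
      _ ≤ D * exp (-(c * bernsteinExponent D v M n t)) :=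
          mul_le_mul_of_nonneg_left (natCast_mul_exp_neg_le hsmall) hD.le
  · have htM := mul_log_pow_four_le_of_lt_log hD hv hM ht (by linarith) hL1
      (by simpa using hn₁) hn₂ hlarge
    exact hT.measureReal_maxPartialSumGe_le_of_mul_log_pow_four_le hD.le hv hM.le hc.le
      (σ := (1 + c) / 2) (by linarith) (by nlinarith) hε (by linarith) hm hL ht hz htM hE

theorem exists_measureReal_maxPartialSumGe_le [IsProbabilityMeasure P]
    (hT : BernsteinTailBound P X D v M) (hD : 0 < D) (hv : 0 < v) (hM : 0 < M) {c : ℝ}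
    (hc : 0 < c) (hc1 : c < 1) :
    ∃ C, D ≤ C ∧ ∀ (n : ℕ) (t : ℝ), 0 < t →
      P.real (maxPartialSumGe X 0 n t) ≤ C * exp (-(c * bernsteinExponent D v M n t)) := by
  obtain ⟨K, hK⟩ := hT.exists_eventually_measureReal_maxPartialSumGe_le hD hv hM hc hc1
  obtain ⟨N, hN⟩ := eventually_atTop.1 hK
  have hC : D ≤ exp (c * K) + N * D + D := by
    have := exp_pos (c * K); have : 0 ≤ (N : ℝ) * D := by positivity
    linarith
  refine ⟨exp (c * K) + N * D + D, hC, fun n t ht => ?_⟩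
  set E := bernsteinExponent D v M n t
  have hE0 : 0 ≤ E := by simp only [E, bernsteinExponent]; positivity
  rcases le_or_gt E K with hEK | hKE
  · calc P.real (maxPartialSumGe X 0 n t) ≤ 1 := measureReal_le_one
      _ ≤ exp (c * K) * exp (-(c * E)) := by
          rw [← exp_add]; exact one_le_exp (by nlinarith)
      _ ≤ (exp (c * K) + N * D + D) * exp (-(c * E)) := by
          gcongr; linarith [(by positivity : (0 : ℝ) ≤ N * D)]
  rcases lt_or_ge n N with hnN | hnN
  · calc P.real (maxPartialSumGe X 0 n t) ≤ n * (D * exp (-E)) :=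
          hT.measureReal_maxPartialSumGe_le_mul hD.le hv hM.le 0 n ht
      _ ≤ N * (D * exp (-(c * E))) := by
          gcongr
          nlinarith
      _ ≤ (exp (c * K) + N * D + D) * exp (-(c * E)) := by
          nlinarith [exp_pos (c * K), exp_pos (-(c * E))]
  · exact (hN n hnN t ht hKE.le).trans (by gcongr)

end BernsteinTailBound

end TailBound

/-- Maximal version of the Merlevède–Peligrad–Rio Bernstein-type inequality for
strongly mixing sequences: if
`P{|S(m+1,m+n)| ≥ t} ≤ D exp(-D t² / (n v² + M² + t M (log n)²))` for all
`m ≥ 0`, `n ≥ 1`, `t ≥ 0`, then for any `0 < c < 1` there is `C ≥ D` such that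
for all `n ≥ 1` and `t > 0`,
`P{max_{1 ≤ m ≤ n} |S(1,m)| ≥ t} ≤ C exp(-c D t² / (n v² + M² + t M (log n)²))`. -/
theorem maximal_merlevede_peligrad_rio_inequality
    {Ω : Type*} [MeasurableSpace Ω] (P : Measure Ω) [IsProbabilityMeasure P]
    (X : ℕ → Ω → ℝ) (D v M : ℝ)
    (hD : 0 < D) (hv : 0 < v) (hM : 0 < M)
    (hS : ∀ m n : ℕ, 1 ≤ n → ∀ t : ℝ, 0 ≤ t →
      (P {ω | t ≤ |∑ i ∈ Finset.Icc (m + 1) (m + n), X i ω|}).toReal ≤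
        D * Real.exp (-(D * t ^ 2) / (n * v ^ 2 + M ^ 2 + t * M * (Real.log n) ^ 2))) :
    ∀ c : ℝ, 0 < c → c < 1 →
      ∃ C : ℝ, D ≤ C ∧
        ∀ n : ℕ, ∀ hn : 1 ≤ n, ∀ t : ℝ, 0 < t →
          (P {ω | t ≤ (Finset.Icc 1 n).sup' (Finset.nonempty_Icc.mpr hn)
              (fun m => |∑ i ∈ Finset.Icc 1 m, X i ω|)}).toReal ≤
            C * Real.exp (-(c * D * t ^ 2) / (n * v ^ 2 + M ^ 2 + t * M * (Real.log n) ^ 2)) := by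
  have hT : BernsteinTailBound P X D v M := fun a k hk s hs => by
    simpa only [measureReal_def, Icc_add_one_left_eq_Ioc, bernsteinExponent, neg_div] using
      hS a k hk s hs
  intro c hc hc1
  obtain ⟨C, hDC, hC⟩ := hT.exists_measureReal_maxPartialSumGe_le hD hv hM hc hc1
  refine ⟨C, hDC, fun n hn t ht => ?_⟩
  have hevent : {ω | t ≤ (Icc 1 n).sup' (nonempty_Icc.mpr hn)
      (fun m => |∑ i ∈ Icc 1 m, X i ω|)} = maxPartialSumGe X 0 n t := by
    ext ω
    simp [maxPartialSumGe, le_sup'_iff, ← Icc_add_one_left_eq_Ioc]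
  have hexp : -(c * D * t ^ 2) / (n * v ^ 2 + M ^ 2 + t * M * log n ^ 2) =
      -(c * bernsteinExponent D v M n t) := by
    unfold bernsteinExponent; ring
  rw [← measureReal_def, hevent, hexp]
  exact hC n t ht
end

section
/- Let d₁ > 0 and d₂ > 0, and for each integer n ≥ 1 define g_n(t) = (t d₂/d₁)·log n for t > 0 (so g₁ ≡ 0). Then the sequence {g_n} satisfies: each g_n is non-decreasing and non-negative, g_n(t) ≤ g_{n+1}(t) for all t > 0 and n ≥ 1, and for every 0 < ρ < 1, lim_{n→∞} inf{ t²/(g_n(t)·log t) : t > 0, g_n(t) > ρ n } = ∞, where the infimum of the empty set is defined to be ∞. -/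
/-!
Write `c = d₂ / d₁` and `L = log n`, so that the ratio in question is `t / (c L log t)`.
Since `log t ≤ 2 √t`, this ratio is at least `√t / (2 c L)`. On the set where `ρ n < c t L`
we have `t > ρ n / (c L)`, and `n` eventually dominates any multiple of `L³`, so `√t / (2 c L)`
eventually exceeds every prescribed bound uniformly in `t`.
-/

open Real Filter

lemma eventually_mul_log_pow_le_natCast (C : ℝ) (k : ℕ) :
    ∀ᶠ n : ℕ in atTop, C * log n ^ k ≤ n := by
  have hbound := (isLittleO_pow_log_id_atTop (n := k)).const_mul_left C |>.bound one_pos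
  filter_upwards [tendsto_natCast_atTop_atTop.eventually hbound] with n hn
  simpa using (le_abs_self _).trans hn

lemma log_le_two_mul_sqrt {t : ℝ} (ht : 0 ≤ t) : log t ≤ 2 * √t := by
  have := log_le_rpow_div ht (ε := 1 / 2) (by norm_num)
  rwa [← sqrt_eq_rpow, div_div_eq_mul_div, div_one, mul_comm] at this

lemma le_div_mul_log_of_sq_le {a K t : ℝ} (ha : 0 < a) (ht : 1 < t)
    (hKt : (2 * a * K) ^ 2 ≤ t) : K ≤ t / (a * log t) := by
  have hsqrt : 0 < √t := sqrt_pos.2 (by linarith)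
  have hlog : 0 < log t := log_pos ht
  have hK : 2 * a * K ≤ √t := (le_abs_self _).trans (abs_le_sqrt hKt)
  calc K ≤ √t / (2 * a) := by rw [le_div_iff₀ (by positivity)]; linarith
    _ = t / (a * (2 * √t)) := by
        rw [eq_div_iff (by positivity)]; field_simp; rw [sq_sqrt (by linarith)]
    _ ≤ t / (a * log t) := by gcongr; exact log_le_two_mul_sqrt (by linarith)

lemma eventually_le_div_log_mul_log {c ρ : ℝ} (hc : 0 < c) (hρ : 0 < ρ) (K : ℝ) :
    ∀ᶠ n : ℕ in atTop, ∀ t : ℝ, ρ * n < t * c * log n → K ≤ t / (c * log n * log t) := by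
  set m := max 1 ((2 * c * K) ^ 2)
  have hlog_ge_one : ∀ᶠ n : ℕ in atTop, 1 ≤ log n :=
    (tendsto_log_atTop.comp tendsto_natCast_atTop_atTop).eventually_ge_atTop 1
  filter_upwards [eventually_mul_log_pow_le_natCast (c * m / ρ) 3, hlog_ge_one]
    with n hn hL t ht
  set L := log n
  have hcL : 0 < c * L := by positivity
  have hmL : 1 ≤ L ^ 2 * m := one_le_mul_of_one_le_of_one_le (one_le_pow₀ hL) (le_max_left _ _)
  have htL : L ^ 2 * m < t := by
    have : c * m * L ^ 3 ≤ ρ * n := by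
      rw [div_mul_eq_mul_div, div_le_iff₀ hρ] at hn; linarith
    nlinarith
  refine le_div_mul_log_of_sq_le hcL (hmL.trans_lt htL) ?_
  calc (2 * (c * L) * K) ^ 2 = L ^ 2 * (2 * c * K) ^ 2 := by ring
    _ ≤ L ^ 2 * m := by gcongr; exact le_max_right _ _
    _ ≤ t := htL.le

/-- The choice `g n t = (t d₂ / d₁) log n` (arising from Adamczak's inequality)
satisfies the hypotheses of the general maximal Bernstein-type inequality:
each `g n` (for `n ≥ 1`) is non-negative and non-decreasing on `(0,∞)`,
`g n t ≤ g (n+1) t`, and for every `0 < ρ < 1`,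
`lim_{n→∞} inf{ t²/(g n t · log t) : t > 0, g n t > ρ n } = ∞`
(the infimum of the empty set being `∞`, the limit condition is expressed as:
for every `K` there is `N` such that for all `n ≥ N` every element of the set
is `≥ K`). -/
theorem adamczak_g_satisfies_hypotheses
    (d₁ d₂ : ℝ) (hd₁ : 0 < d₁) (hd₂ : 0 < d₂) :
    (∀ n : ℕ, 1 ≤ n → ∀ t : ℝ, 0 < t → 0 ≤ t * d₂ / d₁ * Real.log n) ∧
    (∀ n : ℕ, 1 ≤ n → ∀ s t : ℝ, 0 < s → s ≤ t →
      s * d₂ / d₁ * Real.log n ≤ t * d₂ / d₁ * Real.log n) ∧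
    (∀ n : ℕ, 1 ≤ n → ∀ t : ℝ, 0 < t →
      t * d₂ / d₁ * Real.log n ≤ t * d₂ / d₁ * Real.log (n + 1)) ∧
    (∀ ρ : ℝ, 0 < ρ → ρ < 1 → ∀ K : ℝ, ∃ N : ℕ, ∀ n : ℕ, N ≤ n →
      ∀ t : ℝ, 0 < t → ρ * n < t * d₂ / d₁ * Real.log n →
        K ≤ t ^ 2 / (t * d₂ / d₁ * Real.log n * Real.log t)) := by
  refine ⟨fun n _ t ht ↦ by have := log_natCast_nonneg n; positivity,
    fun n _ s t _ hst ↦ by have := log_natCast_nonneg n; gcongr,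
    fun n hn t ht ↦ ?_, fun ρ hρ _ K ↦ ?_⟩
  · have hn' : (0 : ℝ) < n := by exact_mod_cast hn
    gcongr
    linarith
  · obtain ⟨N, hN⟩ := eventually_atTop.1 (eventually_le_div_log_mul_log (div_pos hd₂ hd₁) hρ K)
    refine ⟨N, fun n hn t ht hρt ↦ ?_⟩
    have hratio : t ^ 2 / (t * d₂ / d₁ * log n * log t) = t / (d₂ / d₁ * log n * log t) := by
      field_simp
    rw [hratio]
    exact hN n hn t (by rwa [mul_div_assoc] at hρt)
end

section
/- Let g : (0,∞) → [0,∞) be non-decreasing, and let constants a > c > 0 and p, q ∈ (0,1) with p + q = 1 satisfy a p² > c. Then there exist α ∈ (0,1) and an integer n₀ ≥ 1 such that for all integers n ≥ n₀ and all t > 0 with g(t) ≤ α n, setting u = (n + g(qt) − q²·g(t)) / (1 + q²) and k = ⌈u⌉, one has a p² (n + 1 + g(t)) > c (k + 1 + g(pt)); equivalently, a p² / (k + 1 + g(pt)) > c / (n + 1 + g(t)). -/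
/-!
Since `g` is non-decreasing, `g (q t)` and `g (p t)` are at most `g t`, so
`u ≤ n + g t` and `k + 1 + g (p t) ≤ n + 2 g t + 2 ≤ (1 + 2α) n + 2`. Choosing `α` so small that
`c (1 + 2α) < a p²`, the linear gap `(a p² - c (1 + 2α)) n` beats the additive constant once `n`
is large.
-/

theorem Nat.ceil_lt_add_one_of_le {R : Type*} [Semiring R] [LinearOrder R] [FloorSemiring R]
    [IsStrictOrderedRing R] {u x : R} (hx : 0 ≤ x) (hux : u ≤ x) : (⌈u⌉₊ : R) < x + 1 :=
  (Nat.cast_le.2 (Nat.ceil_le_ceil hux)).trans_lt (Nat.ceil_lt_add_one hx)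

theorem add_sub_mul_div_one_add_le {K : Type*} [Field K] [LinearOrder K] [IsStrictOrderedRing K]
    {x y z s : K} (hx : 0 ≤ x) (hz : 0 ≤ z) (hyz : y ≤ z) (hs : 0 ≤ s) :
    (x + y - s * z) / (1 + s) ≤ x + z :=
  div_le_of_le_mul₀ (by positivity) (by positivity) (by nlinarith)

theorem exists_pos_lt_one_mul_one_add_two_mul_lt {K : Type*} [Field K] [LinearOrder K]
    [IsStrictOrderedRing K] {b c : K} (hc : 0 < c) (hcb : c < b) :
    ∃ α : K, 0 < α ∧ α < 1 ∧ c * (1 + 2 * α) < b := by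
  have hbc : 0 < b - c := sub_pos.2 hcb
  have hb : 0 < b + c := by linarith
  refine ⟨(b - c) / (2 * (b + c)), by positivity, ?_, ?_⟩
  · rw [div_lt_one (by positivity)]
    linarith
  · rw [← sub_pos]
    field_simp
    nlinarith

theorem exists_mul_add_two_mul_add_two_lt {b c : ℝ} (hc : 0 < c) (hcb : c < b) :
    ∃ α : ℝ, 0 < α ∧ α < 1 ∧ ∃ n₀ : ℕ, 1 ≤ n₀ ∧ ∀ n : ℕ, n₀ ≤ n → ∀ G : ℝ, 0 ≤ G →
      G ≤ α * n → c * (n + 2 * G + 2) < b * (n + 1 + G) := by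
  obtain ⟨α, hα0, hα1, hαb⟩ := exists_pos_lt_one_mul_one_add_two_mul_lt hc hcb
  set δ := b - c * (1 + 2 * α)
  have hδ0 : 0 < δ := sub_pos.2 hαb
  obtain ⟨N, hN⟩ := exists_nat_gt (c / δ)
  refine ⟨α, hα0, hα1, N, Nat.cast_pos.1 ((div_pos hc hδ0).trans hN), fun n hn G hG hGn => ?_⟩
  have hcn : c < δ * n := by
    rw [mul_comm, ← div_lt_iff₀ hδ0]
    exact hN.trans_le (Nat.cast_le.2 hn)
  have hcG : c * G ≤ c * (α * n) := mul_le_mul_of_nonneg_left hGn hc.le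
  have hbG : 0 ≤ b * G := mul_nonneg (hc.trans hcb).le hG
  nlinarith

theorem key_arithmetic_inequality_general
    (g : ℝ → ℝ) (hg0 : ∀ t : ℝ, 0 < t → 0 ≤ g t)
    (hg_mono : ∀ s t : ℝ, 0 < s → s ≤ t → g s ≤ g t)
    (a c p q : ℝ) (hc : 0 < c)
    (hp0 : 0 < p) (hp1 : p < 1) (hq0 : 0 < q) (hq1 : q < 1)
    (hap : c < a * p ^ 2) :
    ∃ α : ℝ, 0 < α ∧ α < 1 ∧ ∃ n₀ : ℕ, 1 ≤ n₀ ∧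
      ∀ n : ℕ, n₀ ≤ n → ∀ t : ℝ, 0 < t → g t ≤ α * n →
        ∀ u : ℝ, u = ((n : ℝ) + g (q * t) - q ^ 2 * g t) / (1 + q ^ 2) →
        ∀ k : ℕ, k = ⌈u⌉₊ →
          c * ((k : ℝ) + 1 + g (p * t)) < a * p ^ 2 * ((n : ℝ) + 1 + g t) ∧
          c / ((n : ℝ) + 1 + g t) < a * p ^ 2 / ((k : ℝ) + 1 + g (p * t)) := by
  obtain ⟨α, hα0, hα1, n₀, hn₀, hlt⟩ := exists_mul_add_two_mul_add_two_lt hc hap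
  refine ⟨α, hα0, hα1, n₀, hn₀, ?_⟩
  rintro n hn t ht hgt u rfl k hk
  have hgt0 : 0 ≤ g t := hg0 t ht
  have hgpt0 : 0 ≤ g (p * t) := hg0 _ (mul_pos hp0 ht)
  have hgpt : g (p * t) ≤ g t := hg_mono _ _ (mul_pos hp0 ht) (mul_le_of_le_one_left ht.le hp1.le)
  have hgqt : g (q * t) ≤ g t := hg_mono _ _ (mul_pos hq0 ht) (mul_le_of_le_one_left ht.le hq1.le)
  have hk_lt : (k : ℝ) < n + g t + 1 := hk ▸ Nat.ceil_lt_add_one_of_le (by positivity)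
    (add_sub_mul_div_one_add_le n.cast_nonneg hgt0 hgqt (sq_nonneg q))
  have hmain : c * ((k : ℝ) + 1 + g (p * t)) < a * p ^ 2 * ((n : ℝ) + 1 + g t) :=
    calc c * ((k : ℝ) + 1 + g (p * t)) ≤ c * (n + 2 * g t + 2) :=
        mul_le_mul_of_nonneg_left (by linarith) hc.le
      _ < a * p ^ 2 * (n + 1 + g t) := hlt n hn (g t) hgt0 hgt
  exact ⟨hmain, (div_lt_div_iff₀ (by positivity) (by positivity)).2 hmain⟩

/-- The key arithmetic inequality in Case 1 of the induction step: for `g`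
non-negative and non-decreasing on `(0,∞)`, `0 < c < a`, `p, q ∈ (0,1)` with
`p + q = 1` and `a p² > c`, there exist `α ∈ (0,1)` and `n₀ ≥ 1` such that for
all `n ≥ n₀` and `t > 0` with `g t ≤ α n`, setting
`u = (n + g(qt) - q² g(t))/(1 + q²)` and `k = ⌈u⌉`, one has
`a p² (n + 1 + g t) > c (k + 1 + g(pt))`; equivalently,
`a p² / (k + 1 + g(pt)) > c / (n + 1 + g t)`. -/
theorem key_arithmetic_inequality
    (g : ℝ → ℝ) (hg0 : ∀ t : ℝ, 0 < t → 0 ≤ g t)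
    (hg_mono : ∀ s t : ℝ, 0 < s → s ≤ t → g s ≤ g t)
    (a c p q : ℝ) (hc : 0 < c) (hca : c < a)
    (hp0 : 0 < p) (hp1 : p < 1) (hq0 : 0 < q) (hq1 : q < 1) (hpq : p + q = 1)
    (hap : c < a * p ^ 2) :
    ∃ α : ℝ, 0 < α ∧ α < 1 ∧ ∃ n₀ : ℕ, 1 ≤ n₀ ∧
      ∀ n : ℕ, n₀ ≤ n → ∀ t : ℝ, 0 < t → g t ≤ α * n →
        ∀ u : ℝ, u = ((n : ℝ) + g (q * t) - q ^ 2 * g t) / (1 + q ^ 2) →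
        ∀ k : ℕ, k = ⌈u⌉₊ →
          c * ((k : ℝ) + 1 + g (p * t)) < a * p ^ 2 * ((n : ℝ) + 1 + g t) ∧
          c / ((n : ℝ) + 1 + g t) < a * p ^ 2 / ((k : ℝ) + 1 + g (p * t)) :=
  key_arithmetic_inequality_general g hg0 hg_mono a c p q hc hp0 hp1 hq0 hq1 hap
end
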